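/- Let X ∈ ℝ^{m×n} have rank r ≤ d. Then ‖X‖_* = min over factorizations X = U Vᵀ with U ∈ ℝ^{m×d}, V ∈ ℝ^{n×d} of (‖U‖_F²)/2 + (‖V‖_F²)/2, i.e., the nuclear norm equals the minimal value of the half-sum of squared Frobenius norms of the factors, and the minimum is attained. -/

import Mathlib

open Matrix

/-- Singular values of a real matrix (indexed by columns, unordered):
square roots of the eigenvalues of `Aᴴ * A`. -/
noncomputable def svals {a b : ℕ} (A : Matrix (Fin a) (Fin b) ℝ) : Fin b → ℝ :=
  fun i => Real.sqrt ((show (Aᵀ * A).IsHermitian by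
    simpa using Matrix.isHermitian_conjTranspose_mul_self A).eigenvalues i)

/-- Sum of the `q`-th powers of the singular values of `A`
(i.e. `‖A‖_{S_q}^q`, the `q`-th power of the Schatten-`q` (quasi-)norm). -/
noncomputable def schattenPow {a b : ℕ} (q : ℝ) (A : Matrix (Fin a) (Fin b) ℝ) : ℝ :=
  ∑ i, svals A i ^ q

/-- Squared Frobenius norm. -/
def frobSq {a b : ℕ} (A : Matrix (Fin a) (Fin b) ℝ) : ℝ := ∑ i, ∑ j, A i j ^ 2

/-!
Diagonalize `Xᵀ * X = P * diagonal (σ ^ 2) * Pᵀ` with `P` orthogonal. Then `Y = X * P` has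
orthogonal columns of lengths `σ i`, and since multiplying a factor by `P` preserves its
Frobenius norm, it suffices to factor `Y`.

Lower bound: `Q = Y * diagonal σ⁻¹` is a partial isometry with `Qᵀ * Y = diagonal σ`, so for
`Y = U * Wᵀ` we get `∑ σ i = trace (Qᵀ * U * Wᵀ) ≤ ‖Qᵀ * U‖² / 2 + ‖W‖² / 2 ≤ ‖U‖² / 2 + ‖W‖² / 2`.

Upper bound: `U = Y * diagonal σ^(-1/2)` and `W = diagonal σ^(1/2)` give `‖U‖² = ‖W‖² = ∑ σ i`,
and only `rank X ≤ d` of their columns are nonzero, so they fit into `d` columns.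
-/

section Frobenius

variable {a b c : ℕ}

lemma frobSq_eq_trace (A : Matrix (Fin a) (Fin b) ℝ) : frobSq A = (Aᵀ * A).trace := by
  simp only [frobSq, trace, diag_apply, mul_apply, transpose_apply, ← sq]
  exact Finset.sum_comm

lemma frobSq_nonneg (A : Matrix (Fin a) (Fin b) ℝ) : 0 ≤ frobSq A := by
  unfold frobSq
  positivity

lemma frobSq_diagonal (s : Fin a → ℝ) : frobSq (diagonal s) = ∑ i, s i ^ 2 := by
  simp [frobSq, diagonal_apply, ite_pow]

lemma trace_mul_transpose_le (A B : Matrix (Fin a) (Fin b) ℝ) :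
    (A * Bᵀ).trace ≤ frobSq A / 2 + frobSq B / 2 := by
  simp only [frobSq, trace, diag_apply, mul_apply, transpose_apply, Finset.sum_div,
    ← Finset.sum_add_distrib]
  gcongr with i _ j _
  linarith [two_mul_le_add_sq (A i j) (B i j)]

lemma frobSq_mul_of_gram_eq_one {P : Matrix (Fin c) (Fin a) ℝ} (hP : Pᵀ * P = 1)
    (A : Matrix (Fin a) (Fin b) ℝ) : frobSq (P * A) = frobSq A := by
  rw [frobSq_eq_trace, frobSq_eq_trace, transpose_mul, Matrix.mul_assoc, ← Matrix.mul_assoc Pᵀ,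
    hP, Matrix.one_mul]

lemma frobSq_mul_transpose_of_mul_gram {A : Matrix (Fin a) (Fin b) ℝ}
    {J : Matrix (Fin c) (Fin b) ℝ} (hA : A * (Jᵀ * J) = A) : frobSq (A * Jᵀ) = frobSq A := by
  rw [frobSq_eq_trace, frobSq_eq_trace, transpose_mul, transpose_transpose, Matrix.mul_assoc,
    trace_mul_comm, Matrix.mul_assoc, Matrix.mul_assoc, hA]

/-- Pythagoras for the orthogonal projection `Q * Qᵀ`. -/
lemma frobSq_transpose_mul_le {Q : Matrix (Fin a) (Fin c) ℝ} (hQ : Q * Qᵀ * Q = Q)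
    (U : Matrix (Fin a) (Fin b) ℝ) : frobSq (Qᵀ * U) ≤ frobSq U := by
  have hQ' : Q * (Qᵀ * (Q * (Qᵀ * U))) = Q * (Qᵀ * U) := by
    rw [← Matrix.mul_assoc Qᵀ, ← Matrix.mul_assoc Q, ← Matrix.mul_assoc Q Qᵀ, hQ]
  have hpyth : frobSq (U - Q * (Qᵀ * U)) = frobSq U - frobSq (Qᵀ * U) := by
    simp only [frobSq_eq_trace, transpose_sub, transpose_mul, transpose_transpose,
      Matrix.sub_mul, Matrix.mul_sub, trace_sub, Matrix.mul_assoc, hQ']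
    ring
  linarith [frobSq_nonneg (U - Q * (Qᵀ * U))]

end Frobenius

lemma exists_gram_eq_diagonal_indicator {R ι : Type*} [Semiring R] [Fintype ι]
    [DecidableEq ι] (p : ι → Prop) [DecidablePred p] {d : ℕ}
    (hp : Fintype.card {i // p i} ≤ d) :
    ∃ J : Matrix (Fin d) ι R, Jᵀ * J = diagonal fun i => if p i then 1 else 0 := by
  obtain ⟨g⟩ := Function.Embedding.nonempty_of_card_le (β := Fin d) (by simpa using hp)
  refine ⟨of fun j i => if h : p i then (if g ⟨i, h⟩ = j then 1 else 0) else 0, ?_⟩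
  ext i k
  by_cases hi : p i <;> by_cases hk : p k <;>
    simp [mul_apply, diagonal_apply, hi, hk, g.injective.eq_iff]
  rintro rfl
  exact absurd hi hk

section OrthogonalColumns

variable {m n : ℕ} {Y : Matrix (Fin m) (Fin n) ℝ}

lemma mul_diagonal_eq_self_of_gram {w f : Fin n → ℝ} (hY : Yᵀ * Y = diagonal w)
    (hf : ∀ i, w i ≠ 0 → f i = 1) : Y * diagonal f = Y := by
  ext k i
  rw [mul_diagonal]
  by_cases hw : w i = 0
  · have hcol : ∑ l, Y l i * Y l i = 0 := by
      simpa [mul_apply, hw] using congrFun₂ hY i i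
    have hentry : Y k i = 0 := by
      simpa using (Finset.sum_eq_zero_iff_of_nonneg fun l _ => mul_self_nonneg (Y l i)).mp hcol k
    simp [hentry]
  · rw [hf i hw, mul_one]

lemma sum_le_of_gram_eq_diagonal {d : ℕ} {σ : Fin n → ℝ}
    (hY : Yᵀ * Y = diagonal fun i => σ i ^ 2) {U : Matrix (Fin m) (Fin d) ℝ}
    {W : Matrix (Fin n) (Fin d) ℝ} (hUW : Y = U * Wᵀ) :
    ∑ i, σ i ≤ frobSq U / 2 + frobSq W / 2 := by
  set Q := Y * diagonal fun i => (σ i)⁻¹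
  have hQ : Q * Qᵀ * Q = Q := by
    simp only [Q, transpose_mul, diagonal_transpose, Matrix.mul_assoc]
    rw [← Matrix.mul_assoc Yᵀ, hY]
    simp only [diagonal_mul_diagonal]
    congr 2
    ext i
    rcases eq_or_ne (σ i) 0 with h | h
    · simp [h]
    · field_simp
  have htrace : ∑ i, σ i = (Qᵀ * U * Wᵀ).trace := by
    rw [Matrix.mul_assoc, ← hUW]
    simp only [Q, transpose_mul, diagonal_transpose, Matrix.mul_assoc, hY, diagonal_mul_diagonal,
      trace_diagonal]
    exact Finset.sum_congr rfl fun i _ => by rw [sq, ← mul_assoc, inv_mul_mul_self]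
  calc ∑ i, σ i = (Qᵀ * U * Wᵀ).trace := htrace
    _ ≤ frobSq (Qᵀ * U) / 2 + frobSq W / 2 := trace_mul_transpose_le _ _
    _ ≤ frobSq U / 2 + frobSq W / 2 := by gcongr; exact frobSq_transpose_mul_le hQ U

lemma exists_factorization_of_gram_eq_diagonal {d : ℕ} {σ : Fin n → ℝ} (hσ : ∀ i, 0 ≤ σ i)
    (hd : Fintype.card {i // σ i ≠ 0} ≤ d) (hY : Yᵀ * Y = diagonal fun i => σ i ^ 2) :
    ∃ (U : Matrix (Fin m) (Fin d) ℝ) (W : Matrix (Fin n) (Fin d) ℝ),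
      Y = U * Wᵀ ∧ frobSq U / 2 + frobSq W / 2 = ∑ i, σ i := by
  set s : Fin n → ℝ := fun i => √(σ i)
  have hs_sq : ∀ i, s i ^ 2 = σ i := fun i => Real.sq_sqrt (hσ i)
  have hs_zero : ∀ i, s i = 0 ↔ σ i = 0 := fun i => Real.sqrt_eq_zero (hσ i)
  obtain ⟨J, hJ⟩ := exists_gram_eq_diagonal_indicator (R := ℝ) (fun i => σ i ≠ 0) hd
  have hsupp : ∀ t : Fin n → ℝ, (∀ i, σ i = 0 → t i = 0) →
      diagonal t * (Jᵀ * J) = diagonal t := by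
    intro t ht
    rw [hJ, diagonal_mul_diagonal]
    congr 1
    ext i
    by_cases h : σ i = 0 <;> simp [h, ht]
  have hU : diagonal (fun i => (s i)⁻¹) * (Jᵀ * J) = diagonal fun i => (s i)⁻¹ :=
    hsupp _ fun i h => by simp [(hs_zero i).2 h]
  have hW : diagonal s * (Jᵀ * J) = diagonal s := hsupp _ fun i h => (hs_zero i).2 h
  have hfrobU : frobSq (Y * diagonal fun i => (s i)⁻¹) = ∑ i, σ i := by
    rw [frobSq_eq_trace, transpose_mul, diagonal_transpose, Matrix.mul_assoc,
      ← Matrix.mul_assoc Yᵀ, hY, diagonal_mul_diagonal, diagonal_mul_diagonal, trace_diagonal]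
    refine Finset.sum_congr rfl fun i _ => ?_
    rw [← hs_sq]
    rcases eq_or_ne (s i) 0 with h | h
    · simp [h]
    · field_simp
  refine ⟨Y * diagonal (fun i => (s i)⁻¹) * Jᵀ, diagonal s * Jᵀ, ?_, ?_⟩
  · rw [transpose_mul, transpose_transpose, diagonal_transpose]
    simp only [Matrix.mul_assoc]
    rw [← Matrix.mul_assoc Jᵀ J, ← Matrix.mul_assoc (diagonal _) (Jᵀ * J), hU,
      diagonal_mul_diagonal, mul_diagonal_eq_self_of_gram hY]
    intro i hi
    exact inv_mul_cancel₀ fun h => hi (by simp [(hs_zero i).1 h])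
  · rw [frobSq_mul_transpose_of_mul_gram (by rw [Matrix.mul_assoc, hU]),
      frobSq_mul_transpose_of_mul_gram hW, hfrobU, frobSq_diagonal]
    simp only [hs_sq]
    ring

end OrthogonalColumns

section SingularValues

variable {m n : ℕ}

lemma isHermitian_transpose_mul_self (X : Matrix (Fin m) (Fin n) ℝ) : (Xᵀ * X).IsHermitian := by
  simpa using isHermitian_conjTranspose_mul_self X

lemma sq_svals (X : Matrix (Fin m) (Fin n) ℝ) (i : Fin n) :
    svals X i ^ 2 = (isHermitian_transpose_mul_self X).eigenvalues i :=
  Real.sq_sqrt (by simpa using eigenvalues_conjTranspose_mul_self_nonneg X i)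

lemma schattenPow_one (X : Matrix (Fin m) (Fin n) ℝ) : schattenPow 1 X = ∑ i, svals X i := by
  simp [schattenPow]

lemma rank_eq_card_svals_ne_zero (X : Matrix (Fin m) (Fin n) ℝ) :
    X.rank = Fintype.card {i // svals X i ≠ 0} := by
  rw [← rank_transpose_mul_self, (isHermitian_transpose_mul_self X).rank_eq_card_non_zero_eigs]
  simp only [← sq_svals, ne_eq, pow_eq_zero_iff two_ne_zero]

lemma exists_gram_mul_eq_diagonal_sq_svals (X : Matrix (Fin m) (Fin n) ℝ) :
    ∃ P : Matrix (Fin n) (Fin n) ℝ, Pᵀ * P = 1 ∧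
      (X * P)ᵀ * (X * P) = diagonal fun i => svals X i ^ 2 := by
  set hX := isHermitian_transpose_mul_self X
  set P : Matrix (Fin n) (Fin n) ℝ := (hX.eigenvectorUnitary : Matrix (Fin n) (Fin n) ℝ)
  have hstar : star P = Pᵀ := conjTranspose_eq_transpose_of_trivial P
  have hP : Pᵀ * P = 1 := hstar ▸ Unitary.coe_star_mul_self hX.eigenvectorUnitary
  have hspec : Xᵀ * X = P * diagonal hX.eigenvalues * Pᵀ := by
    rw [← hstar]
    simpa using hX.spectral_theorem
  refine ⟨P, hP, ?_⟩
  calc (X * P)ᵀ * (X * P) = Pᵀ * (Xᵀ * X) * P := by simp only [transpose_mul, Matrix.mul_assoc]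
    _ = _ := by simp [hspec, ← Matrix.mul_assoc, hP, Matrix.mul_assoc _ _ P, sq_svals]

end SingularValues

theorem bi_frobenius_surrogate (m n d : ℕ) (X : Matrix (Fin m) (Fin n) ℝ)
    (hrank : X.rank ≤ d) :
    IsLeast {c : ℝ | ∃ (U : Matrix (Fin m) (Fin d) ℝ) (V : Matrix (Fin n) (Fin d) ℝ),
        X = U * Vᵀ ∧ c = frobSq U / 2 + frobSq V / 2}
      (schattenPow 1 X) := by
  obtain ⟨P, hP, hY⟩ := exists_gram_mul_eq_diagonal_sq_svals X
  have hPP : P * Pᵀ = 1 := mul_eq_one_comm.mp hP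
  rw [schattenPow_one]
  constructor
  · have hσ : ∀ i, 0 ≤ svals X i := fun i => Real.sqrt_nonneg _
    obtain ⟨U, W, hUW, hsum⟩ := exists_factorization_of_gram_eq_diagonal hσ
      (rank_eq_card_svals_ne_zero X ▸ hrank) hY
    refine ⟨U, P * W, ?_, ?_⟩
    · rw [transpose_mul, ← Matrix.mul_assoc, ← hUW, Matrix.mul_assoc, hPP, Matrix.mul_one]
    · rw [frobSq_mul_of_gram_eq_one hP, hsum]
  · rintro c ⟨U, V, hUV, rfl⟩
    have hXP : X * P = U * (Pᵀ * V)ᵀ := by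
      rw [hUV, transpose_mul, transpose_transpose, Matrix.mul_assoc]
    have hPt : Pᵀᵀ * Pᵀ = 1 := by rwa [transpose_transpose]
    simpa only [frobSq_mul_of_gram_eq_one hPt] using sum_le_of_gram_eq_diagonal hY hXP
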